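/- arXiv:1204.0109 — 7 statements merged into one kernel-verified Lean document; each statement's English description precedes it below -/
import Mathlib

section
/- Let g be the unique solution of the Cauchy problem g' = 1/√(a∘g), g(0) = 0, g > 0 on (0,∞), and set h(s) := f(g(s))/√(a(g(s))) for s > 0. Then a function u ∈ C²(Ω) ∩ C(Ω̄) is a positive solution of −div(a(u)Du) + (a'(u)/2)|Du|² = f(u) in Ω with u = 0 on ∂Ω if and only if v := g⁻¹(u) ∈ C²(Ω) ∩ C(Ω̄) is a positive solution of −Δv = h(v) in Ω with v = 0 on ∂Ω. -/
open Set Filter MeasureTheory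
open scoped Topology

/-- `g` solves the Cauchy problem `g' = 1/√(a∘g)` on `(0,∞)`, `g(0) = 0`, `g > 0` on
`(0,∞)`, with `g ∈ C([0,∞)) ∩ C²((0,∞))`. -/
def IsCauchyG (a : ℝ → ℝ) (g : ℝ → ℝ) : Prop :=
  ContinuousOn g (Ici 0) ∧ ContDiffOn ℝ 2 g (Ioi 0) ∧ g 0 = 0 ∧
  (∀ s > (0 : ℝ), 0 < g s) ∧
  ∀ s > (0 : ℝ), HasDerivAt g (1 / Real.sqrt (a (g s))) s

/-- The divergence of a vector field on `ℝ^N`. -/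
noncomputable def divg {N : ℕ} (F : EuclideanSpace ℝ (Fin N) → EuclideanSpace ℝ (Fin N))
    (x : EuclideanSpace ℝ (Fin N)) : ℝ :=
  ∑ i, fderiv ℝ F x (EuclideanSpace.single i 1) i

/-- The Laplacian of a real-valued function on `ℝ^N`. -/
noncomputable def lap {N : ℕ} (v : EuclideanSpace ℝ (Fin N) → ℝ)
    (x : EuclideanSpace ℝ (Fin N)) : ℝ :=
  divg (fun y => gradient v y) x

/-!
Writing `u = g ∘ v`, the flux becomes `a(u) ∇u = √(a(g v)) ∇v` since `g' = 1/√(a ∘ g)`.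
Its divergence is `√(a(g v)) Δv + (a'(g v)/(2 a(g v))) |∇v|²`, and the last term is exactly
cancelled by `a'(u)/2 · |∇u|² = a'(g v)/(2 a(g v)) · |∇v|²`. Hence the quasilinear operator
applied to `u` equals `√(a(g v)) · (−Δv)`, and the two equations are equivalent after dividing
by `√(a(g v))`. The regularity, sign and boundary conditions transfer because `g` is a strictly
increasing homeomorphism of `[0,∞)` onto its image, fixing `0` and with nonvanishing derivative
on `(0,∞)`, so that `g⁻¹` is continuous, and `C²` on `g((0,∞))` by the inverse function theorem.
-/

open InnerProductSpace

theorem StrictMonoOn.continuousOn_of_continuousOn_comp {g : ℝ → ℝ} {s : Set ℝ}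
    [hs : s.OrdConnected] (hgc : ContinuousOn g s) (hg : StrictMonoOn g s)
    {X : Type*} [TopologicalSpace X] {v : X → ℝ} {T : Set X} (hv : MapsTo v T s)
    (hu : ContinuousOn (g ∘ v) T) : ContinuousOn v T := by
  have : (g '' s).OrdConnected := (hs.isPreconnected.image g hgc).ordConnected
  let e := hg.orderIso g s
  have hgv : MapsTo (g ∘ v) T (g '' s) := fun x hx => mem_image_of_mem g (hv hx)
  have hrestrict :
      T.domRestrict v = Subtype.val ∘ e.symm ∘ hgv.restrict (g ∘ v) T (g '' s) := by
    funext x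
    have hx : e ⟨v x, hv x.2⟩ = hgv.restrict (g ∘ v) T (g '' s) x := rfl
    simp only [Function.comp_apply, ← hx, OrderIso.symm_apply_apply, domRestrict_apply]
  rw [continuousOn_iff_continuous_domRestrict, hrestrict]
  exact continuous_subtype_val.comp (e.symm.continuous.comp (hu.mapsToRestrict hgv))

theorem ContDiffAt.of_comp_left {E : Type*} [NormedAddCommGroup E] [NormedSpace ℝ E]
    {g : ℝ → ℝ} {v : E → ℝ} {x : E} {g' : ℝ} {n : WithTop ℕ∞} (hn : n ≠ 0)
    (hg : ContDiffAt ℝ n g (v x)) (hg' : HasDerivAt g g' (v x)) (hg'0 : g' ≠ 0)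
    (hv : ContinuousAt v x) (hgv : ContDiffAt ℝ n (g ∘ v) x) : ContDiffAt ℝ n v x := by
  set e : ℝ ≃L[ℝ] ℝ := ContinuousLinearEquiv.unitsEquivAut ℝ (Units.mk0 g' hg'0)
  have he : HasFDerivAt g (e : ℝ →L[ℝ] ℝ) (v x) :=
    hg'.hasFDerivAt.congr_fderiv (by ext; simp [e])
  have hleft : ∀ᶠ y in 𝓝 x, hg.localInverse he hn (g (v y)) = v y :=
    hv.eventually (hg.hasStrictFDerivAt' he hn).eventually_left_inverse
  exact ((hg.to_localInverse he hn).comp x hgv).congr_of_eventuallyEq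
    (hleft.mono fun y hy => hy.symm)

section VectorCalculus

variable {N : ℕ}

lemma fderiv_single_eq_gradient (w : EuclideanSpace ℝ (Fin N) → ℝ)
    (x : EuclideanSpace ℝ (Fin N)) (i : Fin N) :
    fderiv ℝ w x (EuclideanSpace.single i 1) = gradient w x i := by
  rw [← inner_gradient_left, EuclideanSpace.inner_single_right]
  simp

lemma gradient_comp_of_hasDerivAt {w : EuclideanSpace ℝ (Fin N) → ℝ} {φ : ℝ → ℝ} {d : ℝ}
    {y : EuclideanSpace ℝ (Fin N)} (hφ : HasDerivAt φ d (w y)) (hw : DifferentiableAt ℝ w y) :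
    gradient (fun z => φ (w z)) y = d • gradient w y := by
  have h : HasFDerivAt (fun z => φ (w z)) (d • fderiv ℝ w y) y :=
    hφ.comp_hasFDerivAt y hw.hasFDerivAt
  rw [gradient, gradient, h.fderiv, _root_.map_smul]

lemma ContDiffAt.differentiableAt_gradient {v : EuclideanSpace ℝ (Fin N) → ℝ}
    {x : EuclideanSpace ℝ (Fin N)} (hv : ContDiffAt ℝ 2 v x) :
    DifferentiableAt ℝ (gradient v) x :=
  (toDual ℝ _).symm.toContinuousLinearEquiv.differentiableAt.comp x
    ((hv.fderiv_right (m := 1) (by norm_num)).differentiableAt one_ne_zero)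

lemma Filter.EventuallyEq.divg_eq {F G : EuclideanSpace ℝ (Fin N) → EuclideanSpace ℝ (Fin N)}
    {x : EuclideanSpace ℝ (Fin N)} (h : F =ᶠ[𝓝 x] G) : divg F x = divg G x := by
  simp only [divg, h.fderiv_eq]

lemma divg_smul {φ : EuclideanSpace ℝ (Fin N) → ℝ}
    {F : EuclideanSpace ℝ (Fin N) → EuclideanSpace ℝ (Fin N)} {x : EuclideanSpace ℝ (Fin N)}
    (hφ : DifferentiableAt ℝ φ x) (hF : DifferentiableAt ℝ F x) :
    divg (fun y => φ y • F y) x = φ x * divg F x + ⟪gradient φ x, F x⟫_ℝ := by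
  simp only [divg, fderiv_fun_smul hφ hF, add_apply, FunLike.coe_smul, Pi.smul_apply,
    ContinuousLinearMap.smulRight_apply, PiLp.add_apply, PiLp.smul_apply, smul_eq_mul,
    fderiv_single_eq_gradient, Finset.sum_add_distrib, ← Finset.mul_sum, PiLp.inner_apply,
    RCLike.inner_apply, conj_trivial]
  simp only [mul_comm]

end VectorCalculus

namespace IsCauchyG

variable {a g : ℝ → ℝ}

lemma pos_iff (hg : IsCauchyG a g) {s : ℝ} (hs : 0 ≤ s) : 0 < g s ↔ 0 < s := by
  obtain ⟨-, -, hg0, hg_pos, -⟩ := hg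
  refine ⟨fun h => hs.lt_of_ne ?_, hg_pos s⟩
  rintro rfl
  exact h.ne' hg0

lemma eq_zero_iff (hg : IsCauchyG a g) {s : ℝ} (hs : 0 ≤ s) : g s = 0 ↔ s = 0 := by
  obtain ⟨-, -, hg0, hg_pos, -⟩ := hg
  refine ⟨fun h => ?_, fun h => h ▸ hg0⟩
  by_contra hne
  exact (hg_pos s (hs.lt_of_ne' hne)).ne' h

lemma strictMonoOn (hg : IsCauchyG a g) (ha : ∀ s > (0 : ℝ), 0 < a s) :
    StrictMonoOn g (Ici 0) := by
  obtain ⟨hg_cont, -, -, hg_pos, hg_deriv⟩ := hg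
  refine strictMonoOn_of_deriv_pos (convex_Ici 0) hg_cont fun s hs => ?_
  rw [interior_Ici] at hs
  rw [(hg_deriv s hs).deriv]
  have := ha _ (hg_pos s hs)
  positivity

lemma continuousOn_comp_iff (hg : IsCauchyG a g) (ha : ∀ s > (0 : ℝ), 0 < a s)
    {X : Type*} [TopologicalSpace X] {v : X → ℝ} {T : Set X} (hv : MapsTo v T (Ici 0)) :
    ContinuousOn (g ∘ v) T ↔ ContinuousOn v T :=
  ⟨(hg.strictMonoOn ha).continuousOn_of_continuousOn_comp hg.1 hv, fun h => hg.1.comp h hv⟩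

lemma contDiffOn_comp_iff (hg : IsCauchyG a g) (ha : ∀ s > (0 : ℝ), 0 < a s)
    {E : Type*} [NormedAddCommGroup E] [NormedSpace ℝ E] {Ω : Set E} (hΩ : IsOpen Ω)
    {v : E → ℝ} (hv : ContinuousOn v Ω) (hv_pos : ∀ x ∈ Ω, 0 < v x) :
    ContDiffOn ℝ 2 (g ∘ v) Ω ↔ ContDiffOn ℝ 2 v Ω := by
  obtain ⟨-, hg_C2, -, hg_pos, hg_deriv⟩ := hg
  refine ⟨fun hgv x hx => ?_, fun h => hg_C2.comp h hv_pos⟩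
  have hg' : 1 / Real.sqrt (a (g (v x))) ≠ 0 :=
    one_div_ne_zero (Real.sqrt_pos.mpr (ha _ (hg_pos _ (hv_pos x hx)))).ne'
  exact (ContDiffAt.of_comp_left two_ne_zero (hg_C2.contDiffAt (Ioi_mem_nhds (hv_pos x hx)))
    (hg_deriv _ (hv_pos x hx)) hg' (hv.continuousAt (hΩ.mem_nhds hx))
    (hgv.contDiffAt (hΩ.mem_nhds hx))).contDiffWithinAt

lemma hasDerivAt_sqrt_comp (hg : IsCauchyG a g) (ha : ∀ s > (0 : ℝ), 0 < a s)
    {s : ℝ} (hs : 0 < s) (ha' : DifferentiableAt ℝ a (g s)) :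
    HasDerivAt (fun r => Real.sqrt (a (g r))) (deriv a (g s) / (2 * a (g s))) s := by
  obtain ⟨-, -, -, hg_pos, hg_deriv⟩ := hg
  have hA : 0 < a (g s) := ha _ (hg_pos s hs)
  refine (((Real.hasDerivAt_sqrt hA.ne').comp _ ha'.hasDerivAt).comp _
    (hg_deriv s hs)).congr_deriv ?_
  field_simp
  rw [Real.sq_sqrt hA.le, mul_comm]

end IsCauchyG

theorem quasilinear_operator_eq {N : ℕ} {Ω : Set (EuclideanSpace ℝ (Fin N))} (hΩ : IsOpen Ω)
    {a g : ℝ → ℝ} (ha : ∀ s > (0 : ℝ), 0 < a s) (ha' : ContDiffOn ℝ 1 a (Ioi 0))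
    (hg : IsCauchyG a g) {u v : EuclideanSpace ℝ (Fin N) → ℝ} (huv : ∀ x ∈ Ω, g (v x) = u x)
    (hv : ContDiffOn ℝ 2 v Ω) (hv_pos : ∀ x ∈ Ω, 0 < v x) {x : EuclideanSpace ℝ (Fin N)}
    (hx : x ∈ Ω) :
    - divg (fun y => a (u y) • gradient u y) x + deriv a (u x) / 2 * ‖gradient u x‖ ^ 2
      = Real.sqrt (a (g (v x))) * - lap v x := by
  have ⟨_, _, _, hg_pos, hg_deriv⟩ := hg
  have hv_diff : ∀ y ∈ Ω, DifferentiableAt ℝ v y := fun y hy =>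
    (hv.contDiffAt (hΩ.mem_nhds hy)).differentiableAt two_ne_zero
  have hgrad : ∀ y ∈ Ω, gradient u y = (1 / Real.sqrt (a (g (v y)))) • gradient v y := by
    intro y hy
    have hu : u =ᶠ[𝓝 y] fun z => g (v z) :=
      eventually_of_mem (hΩ.mem_nhds hy) fun z hz => (huv z hz).symm
    rw [hu.gradient_eq, gradient_comp_of_hasDerivAt (hg_deriv _ (hv_pos y hy)) (hv_diff y hy)]
  have hflux : (fun y => a (u y) • gradient u y)
      =ᶠ[𝓝 x] fun y => Real.sqrt (a (g (v y))) • gradient v y := by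
    filter_upwards [hΩ.mem_nhds hx] with y hy
    rw [← huv y hy, hgrad y hy, smul_smul, mul_one_div, Real.div_sqrt]
  have hA : 0 < a (g (v x)) := ha _ (hg_pos _ (hv_pos x hx))
  have hψ := hg.hasDerivAt_sqrt_comp ha (hv_pos x hx)
    ((ha'.contDiffAt (Ioi_mem_nhds (hg_pos _ (hv_pos x hx)))).differentiableAt one_ne_zero)
  rw [hflux.divg_eq, divg_smul (φ := fun y => Real.sqrt (a (g (v y))))
      (hψ.differentiableAt.comp x (hv_diff x hx))
      (hv.contDiffAt (hΩ.mem_nhds hx)).differentiableAt_gradient,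
    gradient_comp_of_hasDerivAt hψ (hv_diff x hx), real_inner_smul_left,
    real_inner_self_eq_norm_sq, hgrad x hx, norm_smul, mul_pow, Real.norm_eq_abs, sq_abs,
    ← huv x hx, lap, div_pow, one_pow, Real.sq_sqrt hA.le]
  ring

theorem quasilinear_eq_iff_semilinear_eq {N : ℕ} {Ω : Set (EuclideanSpace ℝ (Fin N))}
    (hΩ : IsOpen Ω) {a f g : ℝ → ℝ} (ha : ∀ s > (0 : ℝ), 0 < a s)
    (ha' : ContDiffOn ℝ 1 a (Ioi 0)) (hg : IsCauchyG a g) {u v : EuclideanSpace ℝ (Fin N) → ℝ}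
    (huv : ∀ x ∈ Ω, g (v x) = u x) (hv : ContDiffOn ℝ 2 v Ω) (hv_pos : ∀ x ∈ Ω, 0 < v x)
    {x : EuclideanSpace ℝ (Fin N)} (hx : x ∈ Ω) :
    (- divg (fun y => a (u y) • gradient u y) x
        + deriv a (u x) / 2 * ‖gradient u x‖ ^ 2 = f (u x)) ↔
      - lap v x = f (g (v x)) / Real.sqrt (a (g (v x))) := by
  have hA : 0 < a (g (v x)) := ha _ (hg.2.2.2.1 _ (hv_pos x hx))
  rw [quasilinear_operator_eq hΩ ha ha' hg huv hv hv_pos hx, ← huv x hx,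
    eq_div_iff (Real.sqrt_pos.mpr hA).ne', mul_comm]

/-- `v = g⁻¹(u)` is encoded by `u = g ∘ v` with `v ≥ 0` on `Ω̄`. -/
theorem quasilinear_semilinear_equivalence_general {N : ℕ} (Ω : Set (EuclideanSpace ℝ (Fin N)))
    (hΩ_open : IsOpen Ω)
    (a : ℝ → ℝ) (ha_pos : ∀ s > (0 : ℝ), 0 < a s)
    (ha_reg : ContDiffOn ℝ 1 a (Ioi 0))
    (f : ℝ → ℝ)
    (g : ℝ → ℝ) (hg : IsCauchyG a g)
    (u v : EuclideanSpace ℝ (Fin N) → ℝ)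
    (huv : ∀ x ∈ closure Ω, 0 ≤ v x ∧ g (v x) = u x) :
    (ContDiffOn ℝ 2 u Ω ∧ ContinuousOn u (closure Ω) ∧
      (∀ x ∈ Ω, 0 < u x) ∧ (∀ x ∈ frontier Ω, u x = 0) ∧
      ∀ x ∈ Ω, - divg (fun y => a (u y) • gradient u y) x
          + deriv a (u x) / 2 * ‖gradient u x‖ ^ 2 = f (u x)) ↔
    (ContDiffOn ℝ 2 v Ω ∧ ContinuousOn v (closure Ω) ∧
      (∀ x ∈ Ω, 0 < v x) ∧ (∀ x ∈ frontier Ω, v x = 0) ∧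
      ∀ x ∈ Ω, - lap v x = f (g (v x)) / Real.sqrt (a (g (v x)))) := by
  have huvΩ : ∀ x ∈ Ω, g (v x) = u x := fun x hx => (huv x (subset_closure hx)).2
  have hpos (x) (hx : x ∈ Ω) : 0 < u x ↔ 0 < v x := by
    rw [← huvΩ x hx]; exact hg.pos_iff (huv x (subset_closure hx)).1
  have hzero (x) (hx : x ∈ frontier Ω) : u x = 0 ↔ v x = 0 := by
    have hx' := huv x (frontier_subset_closure hx)
    rw [← hx'.2]; exact hg.eq_zero_iff hx'.1
  have hcont : ContinuousOn u (closure Ω) ↔ ContinuousOn v (closure Ω) := by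
    rw [← hg.continuousOn_comp_iff ha_pos fun x hx => (huv x hx).1]
    exact continuousOn_congr fun x hx => (huv x hx).2.symm
  have hC2 (hv : ContinuousOn v Ω) (hv_pos : ∀ x ∈ Ω, 0 < v x) :
      ContDiffOn ℝ 2 u Ω ↔ ContDiffOn ℝ 2 v Ω := by
    rw [← hg.contDiffOn_comp_iff ha_pos hΩ_open hv hv_pos]
    exact contDiffOn_congr fun x hx => (huvΩ x hx).symm
  constructor
  · rintro ⟨hu2, hu, hu_pos, hu0, hu_eq⟩
    have hv := hcont.mp hu
    have hv_pos x hx := (hpos x hx).mp (hu_pos x hx)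
    have hv2 := (hC2 (hv.mono subset_closure) hv_pos).mp hu2
    exact ⟨hv2, hv, hv_pos, fun x hx => (hzero x hx).mp (hu0 x hx),
      fun x hx => (quasilinear_eq_iff_semilinear_eq hΩ_open ha_pos ha_reg hg huvΩ hv2 hv_pos
        hx).mp (hu_eq x hx)⟩
  · rintro ⟨hv2, hv, hv_pos, hv0, hv_eq⟩
    exact ⟨(hC2 (hv.mono subset_closure) hv_pos).mpr hv2, hcont.mpr hv,
      fun x hx => (hpos x hx).mpr (hv_pos x hx), fun x hx => (hzero x hx).mpr (hv0 x hx),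
      fun x hx => (quasilinear_eq_iff_semilinear_eq hΩ_open ha_pos ha_reg hg huvΩ hv2 hv_pos
        hx).mpr (hv_eq x hx)⟩

/-- Equivalence between the quasi-linear problem for `u` and the semi-linear problem
`−Δv = h(v)` for `v = g⁻¹(u)` (encoded by `u = g ∘ v` with `v ≥ 0` on `Ω̄`),
where `h(s) = f(g(s))/√(a(g(s)))`. -/
theorem quasilinear_semilinear_equivalence {N : ℕ} (Ω : Set (EuclideanSpace ℝ (Fin N)))
    (hΩ_open : IsOpen Ω) (hΩ_bdd : Bornology.IsBounded Ω) (hΩ_ne : Ω.Nonempty)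
    (a : ℝ → ℝ) (ha_pos : ∀ s > (0 : ℝ), 0 < a s)
    (ha_reg : ContDiffOn ℝ 1 a (Ioi 0)) (ha_bdd : ∃ c > (0 : ℝ), ∀ s > (0 : ℝ), c ≤ a s)
    (f : ℝ → ℝ) (hf_pos : ∀ s > (0 : ℝ), 0 < f s) (hf_reg : ContDiffOn ℝ 1 f (Ioi 0))
    (g : ℝ → ℝ) (hg : IsCauchyG a g)
    (u v : EuclideanSpace ℝ (Fin N) → ℝ)
    (huv : ∀ x ∈ closure Ω, 0 ≤ v x ∧ g (v x) = u x) :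
    (ContDiffOn ℝ 2 u Ω ∧ ContinuousOn u (closure Ω) ∧
      (∀ x ∈ Ω, 0 < u x) ∧ (∀ x ∈ frontier Ω, u x = 0) ∧
      ∀ x ∈ Ω, - divg (fun y => a (u y) • gradient u y) x
          + deriv a (u x) / 2 * ‖gradient u x‖ ^ 2 = f (u x)) ↔
    (ContDiffOn ℝ 2 v Ω ∧ ContinuousOn v (closure Ω) ∧
      (∀ x ∈ Ω, 0 < v x) ∧ (∀ x ∈ frontier Ω, v x = 0) ∧
      ∀ x ∈ Ω, - lap v x = f (g (v x)) / Real.sqrt (a (g (v x)))) :=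
  quasilinear_semilinear_equivalence_general Ω hΩ_open a ha_pos ha_reg f g hg u v huv
end

section
/- Let g be the unique solution of the Cauchy problem g' = 1/√(a∘g), g(0) = 0, g > 0 on (0,∞). Then lim_{s→0⁺} g(s)/s^{1/(1−μ)} = (1−μ)^{1/(1−μ)} · a₀^{1/(2(μ−1))}. -/
open Set Filter MeasureTheory
open scoped Topology

namespace IsCauchyG

variable {a g : ℝ → ℝ}

theorem pos (hg : IsCauchyG a g) : ∀ s > (0 : ℝ), 0 < g s := hg.2.2.2.1

theorem tendsto_nhdsGT (hg : IsCauchyG a g) : Tendsto g (𝓝[>] 0) (𝓝[>] 0) := by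
  obtain ⟨hgc, -, hg0, hgpos, -⟩ := hg
  have hcont : Tendsto g (𝓝[>] 0) (𝓝 0) := by
    simpa [hg0] using ((hgc 0 self_mem_Ici).tendsto).mono_left
      (nhdsWithin_mono 0 Ioi_subset_Ici_self)
  exact tendsto_nhdsWithin_of_tendsto_nhds_of_eventually_within _ hcont
    (eventually_nhdsWithin_of_forall hgpos)

end IsCauchyG

theorem hasDerivAt_rpow_one_sub_of_hasDerivAt_one_div_sqrt {g : ℝ → ℝ} {b s μ : ℝ}
    (hb : 0 < b) (hgs : 0 < g s) (hg : HasDerivAt g (1 / Real.sqrt b) s) :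
    HasDerivAt (fun t => g t ^ (1 - μ)) ((1 - μ) / Real.sqrt (b * g s ^ (2 * μ))) s := by
  refine ((Real.hasDerivAt_rpow_const (p := 1 - μ) (Or.inl hgs.ne')).comp s hg).congr_deriv ?_
  have hsqrt : Real.sqrt (b * g s ^ (2 * μ)) = Real.sqrt b * g s ^ μ := by
    rw [Real.sqrt_mul hb.le, Real.sqrt_eq_rpow (g s ^ (2 * μ)), ← Real.rpow_mul hgs.le]
    ring_nf
  have hpow : (0 : ℝ) < g s ^ μ := Real.rpow_pos_of_pos hgs μ
  have hsqrt_pos : 0 < Real.sqrt b := Real.sqrt_pos.mpr hb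
  rw [hsqrt, show (1 : ℝ) - μ - 1 = -μ by ring, Real.rpow_neg hgs.le]
  field_simp

theorem IsCauchyG.tendsto_rpow_one_sub_div {a g : ℝ → ℝ} {a₀ μ : ℝ}
    (ha_pos : ∀ s > (0 : ℝ), 0 < a s) (ha₀ : 0 < a₀) (hμ₁ : μ < 1)
    (hlim_a : Tendsto (fun s : ℝ => a s * s ^ (2 * μ)) (𝓝[>] 0) (𝓝 a₀))
    (hg : IsCauchyG a g) :
    Tendsto (fun s => g s ^ (1 - μ) / s) (𝓝[>] 0) (𝓝 ((1 - μ) / Real.sqrt a₀)) := by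
  have hgz := hg.tendsto_nhdsGT
  obtain ⟨-, -, -, hgpos, hgder⟩ := hg
  have hderiv_lim : Tendsto (fun s => (1 - μ) / Real.sqrt (a (g s) * g s ^ (2 * μ)))
      (𝓝[>] 0) (𝓝 ((1 - μ) / Real.sqrt a₀)) :=
    tendsto_const_nhds.div (Real.continuous_sqrt.continuousAt.tendsto.comp (hlim_a.comp hgz))
      (Real.sqrt_pos.mpr ha₀).ne'
  have hpow_lim : Tendsto (fun s => g s ^ (1 - μ)) (𝓝[>] 0) (𝓝 0) := by
    have h := (Real.continuousAt_rpow_const 0 (1 - μ) (Or.inr (sub_pos.mpr hμ₁).le)).tendsto.comp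
      (tendsto_nhdsWithin_iff.mp hgz).1
    rwa [Real.zero_rpow (sub_pos.mpr hμ₁).ne'] at h
  refine HasDerivAt.lhopital_zero_nhdsGT (g' := fun _ => 1)
    (eventually_nhdsWithin_of_forall fun s hs =>
      hasDerivAt_rpow_one_sub_of_hasDerivAt_one_div_sqrt (ha_pos _ (hgpos s hs)) (hgpos s hs)
        (hgder s hs))
    (eventually_nhdsWithin_of_forall fun s _ => hasDerivAt_id s)
    (eventually_nhdsWithin_of_forall fun _ _ => one_ne_zero) hpow_lim
    (tendsto_id.mono_left nhdsWithin_le_nhds) ?_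
  simpa using hderiv_lim

theorem tendsto_div_rpow_inv_of_tendsto_rpow_div {f : ℝ → ℝ} {p L : ℝ} (hp : 0 < p)
    (hf : ∀ᶠ s in 𝓝[>] 0, 0 ≤ f s) (h : Tendsto (fun s => f s ^ p / s) (𝓝[>] 0) (𝓝 L)) :
    Tendsto (fun s => f s / s ^ (1 / p)) (𝓝[>] 0) (𝓝 (L ^ (1 / p))) := by
  refine ((Real.continuousAt_rpow_const L (1 / p) (Or.inr (by positivity))).tendsto.comp h).congr'
    ?_
  filter_upwards [hf, self_mem_nhdsWithin] with s hfs (hs : 0 < s)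
  rw [Function.comp_apply, Real.div_rpow (Real.rpow_nonneg hfs _) hs.le, ← Real.rpow_mul hfs,
    mul_one_div_cancel hp.ne', Real.rpow_one]

theorem div_sqrt_rpow_one_div_one_sub {a₀ μ : ℝ} (ha₀ : 0 < a₀) (hμ₁ : μ < 1) :
    ((1 - μ) / Real.sqrt a₀) ^ (1 / (1 - μ)) =
      (1 - μ) ^ (1 / (1 - μ)) * a₀ ^ (1 / (2 * (μ - 1))) := by
  have h1μ : 0 < 1 - μ := sub_pos.mpr hμ₁
  rw [Real.div_rpow h1μ.le (Real.sqrt_nonneg _), Real.sqrt_eq_rpow, ← Real.rpow_mul ha₀.le,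
    div_eq_mul_inv, ← Real.rpow_neg ha₀.le]
  congr 2
  have : μ - 1 ≠ 0 := by linarith
  field_simp
  ring

theorem g_asymptotics_at_zero_general (a : ℝ → ℝ) (ha_pos : ∀ s > (0 : ℝ), 0 < a s)
    (a₀ μ : ℝ) (ha₀ : 0 < a₀) (hμ₁ : μ < 1)
    (hlim_a : Tendsto (fun s : ℝ => a s * s ^ (2 * μ)) (𝓝[>] 0) (𝓝 a₀))
    (g : ℝ → ℝ) (hg : IsCauchyG a g) :
    Tendsto (fun s : ℝ => g s / s ^ (1 / (1 - μ))) (𝓝[>] 0)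
      (𝓝 ((1 - μ) ^ (1 / (1 - μ)) * a₀ ^ (1 / (2 * (μ - 1))))) := by
  rw [← div_sqrt_rpow_one_div_one_sub ha₀ hμ₁]
  exact tendsto_div_rpow_inv_of_tendsto_rpow_div (sub_pos.mpr hμ₁)
    (eventually_nhdsWithin_of_forall fun s hs => (hg.pos s hs).le)
    (hg.tendsto_rpow_one_sub_div ha_pos ha₀ hμ₁ hlim_a)

/-- Asymptotic behavior of `g` at the origin:
`lim_{s→0⁺} g(s)/s^{1/(1−μ)} = (1−μ)^{1/(1−μ)} a₀^{1/(2(μ−1))}`. -/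
theorem g_asymptotics_at_zero (a : ℝ → ℝ) (ha_pos : ∀ s > (0 : ℝ), 0 < a s)
    (ha_reg : ContDiffOn ℝ 1 a (Ioi 0)) (ha_bdd : ∃ c > (0 : ℝ), ∀ s > (0 : ℝ), c ≤ a s)
    (a₀ μ : ℝ) (ha₀ : 0 < a₀) (hμ₀ : 0 ≤ μ) (hμ₁ : μ < 1)
    (hlim_a : Tendsto (fun s : ℝ => a s * s ^ (2 * μ)) (𝓝[>] 0) (𝓝 a₀))
    (g : ℝ → ℝ) (hg : IsCauchyG a g) :
    Tendsto (fun s : ℝ => g s / s ^ (1 / (1 - μ))) (𝓝[>] 0)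
      (𝓝 ((1 - μ) ^ (1 / (1 - μ)) * a₀ ^ (1 / (2 * (μ - 1))))) :=
  g_asymptotics_at_zero_general a ha_pos a₀ μ ha₀ hμ₁ hlim_a g hg
end

section
/- Let g be the unique solution of the Cauchy problem g' = 1/√(a∘g), g(0) = 0, g > 0 on (0,∞), and set h(s) := f(g(s))/√(a(g(s))) for s > 0. Then lim_{s→0⁺} h(s)/s^{(μ−γ)/(1−μ)} = f₀ · a₀^{(1−γ)/(2(μ−1))} · (1−μ)^{−(γ−μ)/(1−μ)}. -/
/-!
Since `g' = 1/√(a ∘ g)` and `√(a t) ∼ √a₀ t^(-μ)` as `t → 0⁺`, L'Hôpital's rule applied to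
`g(s)^(1-μ) / s` gives `g(s)^(1-μ) ∼ (1 - μ) s / √a₀`. Substituting `t = g(s) → 0⁺` into
`f(t) ∼ f₀ t^(-γ)` and the asymptotics of `√a` yields the limit.
-/

open Set Filter MeasureTheory
open scoped Topology

theorem Real.sqrt_mul_rpow_two_mul (x : ℝ) {u : ℝ} (hu : 0 ≤ u) (r : ℝ) :
    √(x * u ^ (2 * r)) = √x * u ^ r := by
  rw [Real.sqrt_mul' x (Real.rpow_nonneg hu _), Real.sqrt_eq_rpow (u ^ _), ← Real.rpow_mul hu]
  ring_nf

theorem div_sqrt_div_rpow_eq {t s μ : ℝ} (ht : 0 < t) (hs : 0 < s) (hμ : μ ≠ 1) (x y γ : ℝ) :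
    y / √x / s ^ ((μ - γ) / (1 - μ)) =
      y * t ^ γ / √(x * t ^ (2 * μ)) * (t ^ (1 - μ) / s) ^ ((μ - γ) / (1 - μ)) := by
  have h1μ : 1 - μ ≠ 0 := sub_ne_zero.mpr hμ.symm
  rw [Real.sqrt_mul_rpow_two_mul x ht.le, Real.div_rpow (Real.rpow_nonneg ht.le _) hs.le,
    ← Real.rpow_mul ht.le, mul_div_cancel₀ _ h1μ, Real.rpow_sub ht]
  have := Real.rpow_pos_of_pos ht γ
  have := Real.rpow_pos_of_pos ht μ
  field_simp

theorem div_sqrt_mul_rpow_eq_mul_rpow_mul_rpow {a₀ μ : ℝ} (ha₀ : 0 < a₀) (hμ : μ < 1)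
    (f₀ γ : ℝ) :
    f₀ / √a₀ * ((1 - μ) * (√a₀)⁻¹) ^ ((μ - γ) / (1 - μ)) =
      f₀ * a₀ ^ ((1 - γ) / (2 * (μ - 1))) * (1 - μ) ^ (-(γ - μ) / (1 - μ)) := by
  have h1μ : 1 - μ ≠ 0 := by linarith
  have hμ1 : μ - 1 ≠ 0 := by linarith
  have hexp : (1 - γ) / (2 * (μ - 1)) = -(1 / 2) + -(1 / 2 * ((μ - γ) / (1 - μ))) := by
    field_simp
    ring
  rw [Real.mul_rpow (by linarith) (inv_nonneg.mpr (Real.sqrt_nonneg _)),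
    Real.inv_rpow (Real.sqrt_nonneg _), Real.sqrt_eq_rpow, ← Real.rpow_mul ha₀.le, hexp,
    Real.rpow_add ha₀, Real.rpow_neg ha₀.le, Real.rpow_neg ha₀.le,
    show -(γ - μ) / (1 - μ) = (μ - γ) / (1 - μ) by ring]
  ring

theorem tendsto_rpow_one_sub_div_of_hasDerivAt {g ψ : ℝ → ℝ} {μ c : ℝ} (hμ : μ < 1)
    (hg : Tendsto g (𝓝[>] 0) (𝓝[>] 0)) (hg' : ∀ᶠ s in 𝓝[>] 0, HasDerivAt g (ψ (g s)) s)
    (hψ : Tendsto (fun t => t ^ (-μ) * ψ t) (𝓝[>] 0) (𝓝 c)) :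
    Tendsto (fun s => g s ^ (1 - μ) / s) (𝓝[>] 0) (𝓝 ((1 - μ) * c)) := by
  have hg_pos : ∀ᶠ s in 𝓝[>] 0, 0 < g s := hg self_mem_nhdsWithin
  refine HasDerivAt.lhopital_zero_nhdsGT
    (f' := fun s => ψ (g s) * (1 - μ) * g s ^ (1 - μ - 1)) (g' := fun _ => 1) ?_
    (Eventually.of_forall fun s => hasDerivAt_id' s) (Eventually.of_forall fun _ => one_ne_zero)
    ((tendsto_nhds_of_tendsto_nhdsWithin hg).rpow_const_nhds_zero (by linarith))
    nhdsWithin_le_nhds ?_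
  · filter_upwards [hg', hg_pos] with s hs hgs
    exact hs.rpow_const (.inl hgs.ne')
  · refine ((hψ.comp hg).const_mul (1 - μ)).congr' ?_
    filter_upwards with s
    simp only [Function.comp_apply, div_one, sub_sub_cancel_left]
    ring

theorem IsCauchyG.tendsto_nhdsGT_s9 {a g : ℝ → ℝ} (hg : IsCauchyG a g) :
    Tendsto g (𝓝[>] 0) (𝓝[>] 0) := by
  obtain ⟨hg_cont, -, hg_zero, hg_pos, -⟩ := hg
  have hg_lim := (hg_cont 0 self_mem_Ici).mono Ioi_subset_Ici_self
  rw [ContinuousWithinAt, hg_zero] at hg_lim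
  exact tendsto_nhdsWithin_iff.mpr ⟨hg_lim, eventually_nhdsWithin_of_forall hg_pos⟩

theorem h_asymptotics_at_zero_general (a : ℝ → ℝ) (f : ℝ → ℝ) (a₀ f₀ μ γ : ℝ) (ha₀ : 0 < a₀) (hμ₁ : μ < 1)
    (hlim_a : Tendsto (fun s : ℝ => a s * s ^ (2 * μ)) (𝓝[>] 0) (𝓝 a₀))
    (hlim_f : Tendsto (fun s : ℝ => f s * s ^ γ) (𝓝[>] 0) (𝓝 f₀))
    (g : ℝ → ℝ) (hg : IsCauchyG a g) :
    Tendsto (fun s : ℝ => (f (g s) / Real.sqrt (a (g s))) / s ^ ((μ - γ) / (1 - μ)))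
      (𝓝[>] 0)
      (𝓝 (f₀ * a₀ ^ ((1 - γ) / (2 * (μ - 1))) * (1 - μ) ^ (-(γ - μ) / (1 - μ)))) := by
  have hg_lim := hg.tendsto_nhdsGT_s9
  obtain ⟨-, -, -, -, hg_deriv⟩ := hg
  have hsqrt_a₀ : √a₀ ≠ 0 := (Real.sqrt_pos.mpr ha₀).ne'
  have hψ : Tendsto (fun t => t ^ (-μ) * (1 / √(a t))) (𝓝[>] 0) (𝓝 (√a₀)⁻¹) := by
    refine (hlim_a.sqrt.inv₀ hsqrt_a₀).congr' ?_
    filter_upwards [self_mem_nhdsWithin] with t (ht : 0 < t)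
    rw [Real.sqrt_mul_rpow_two_mul _ ht.le, Real.rpow_neg ht.le]
    ring
  have hrate := tendsto_rpow_one_sub_div_of_hasDerivAt hμ₁ hg_lim
    (eventually_nhdsWithin_of_forall fun s hs => hg_deriv s hs) hψ
  have hlim := ((hlim_f.comp hg_lim).div (hlim_a.comp hg_lim).sqrt hsqrt_a₀).mul
    (hrate.rpow_const (p := (μ - γ) / (1 - μ)) (.inl (by positivity)))
  rw [← div_sqrt_mul_rpow_eq_mul_rpow_mul_rpow ha₀ hμ₁]
  refine hlim.congr' ?_
  filter_upwards [self_mem_nhdsWithin, hg_lim self_mem_nhdsWithin] with s (hs : 0 < s) hgs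
  exact (div_sqrt_div_rpow_eq hgs hs hμ₁.ne _ _ _).symm

/-- Asymptotic behavior of `h(s) = f(g(s))/√(a(g(s)))` at the origin:
`lim_{s→0⁺} h(s)/s^{(μ−γ)/(1−μ)} = f₀ a₀^{(1−γ)/(2(μ−1))} (1−μ)^{−(γ−μ)/(1−μ)}`. -/
theorem h_asymptotics_at_zero (a : ℝ → ℝ) (ha_pos : ∀ s > (0 : ℝ), 0 < a s)
    (ha_reg : ContDiffOn ℝ 1 a (Ioi 0)) (ha_bdd : ∃ c > (0 : ℝ), ∀ s > (0 : ℝ), c ≤ a s)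
    (f : ℝ → ℝ) (hf_pos : ∀ s > (0 : ℝ), 0 < f s) (hf_reg : ContDiffOn ℝ 1 f (Ioi 0))
    (a₀ f₀ μ γ : ℝ) (ha₀ : 0 < a₀) (hf₀ : 0 < f₀) (hμ₀ : 0 ≤ μ) (hμ₁ : μ < 1) (hγ : 1 < γ)
    (hlim_a : Tendsto (fun s : ℝ => a s * s ^ (2 * μ)) (𝓝[>] 0) (𝓝 a₀))
    (hlim_f : Tendsto (fun s : ℝ => f s * s ^ γ) (𝓝[>] 0) (𝓝 f₀))
    (g : ℝ → ℝ) (hg : IsCauchyG a g) :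
    Tendsto (fun s : ℝ => (f (g s) / Real.sqrt (a (g s))) / s ^ ((μ - γ) / (1 - μ)))
      (𝓝[>] 0)
      (𝓝 (f₀ * a₀ ^ ((1 - γ) / (2 * (μ - 1))) * (1 - μ) ^ (-(γ - μ) / (1 - μ)))) :=
  h_asymptotics_at_zero_general a f a₀ f₀ μ γ ha₀ hμ₁ hlim_a hlim_f g hg
end

section
/- Let g be the unique solution of the Cauchy problem g' = 1/√(a∘g), g(0) = 0, g > 0 on (0,∞). If 2f'(s)a(s) ≤ f(s)a'(s) for every s > 0, then the function s ↦ f(g(s))/√(a(g(s))) is nonincreasing on (0,∞). -/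
open Set Filter MeasureTheory
open scoped Topology

/-!
The condition `2 f' a ≤ f a'` says exactly that `u ↦ f u / √(a u)` has nonpositive derivative,
so this function is nonincreasing; and `g` is increasing since `g' = 1/√(a∘g) > 0`. The claim
is the composition of the two.
-/

theorem HasDerivAt.div_sqrt {f a : ℝ → ℝ} {f' a' x : ℝ} (hf : HasDerivAt f f' x)
    (ha : HasDerivAt a a' x) (hx : 0 < a x) :
    HasDerivAt (fun y => f y / Real.sqrt (a y))
      ((2 * f' * a x - f x * a') / (2 * a x * Real.sqrt (a x))) x := by
  refine (hf.div (ha.sqrt hx.ne') (Real.sqrt_pos.2 hx).ne').congr_deriv ?_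
  have hsqrt : 0 < Real.sqrt (a x) := Real.sqrt_pos.2 hx
  rw [Real.sq_sqrt hx.le]
  field_simp
  rw [Real.sq_sqrt hx.le]
  ring

theorem antitoneOn_div_sqrt {D : Set ℝ} (hD : Convex ℝ D) (hD_open : IsOpen D) {f a : ℝ → ℝ}
    (ha_pos : ∀ u ∈ D, 0 < a u) (hf : DifferentiableOn ℝ f D) (ha : DifferentiableOn ℝ a D)
    (hfa : ∀ u ∈ D, 2 * deriv f u * a u ≤ f u * deriv a u) :
    AntitoneOn (fun u => f u / Real.sqrt (a u)) D := by
  have hderiv : ∀ u ∈ D, HasDerivAt (fun y => f y / Real.sqrt (a y))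
      ((2 * deriv f u * a u - f u * deriv a u) / (2 * a u * Real.sqrt (a u))) u :=
    fun u hu => HasDerivAt.div_sqrt ((hf.differentiableAt (hD_open.mem_nhds hu)).hasDerivAt)
      ((ha.differentiableAt (hD_open.mem_nhds hu)).hasDerivAt) (ha_pos u hu)
  refine antitoneOn_of_hasDerivWithinAt_nonpos hD
    (fun u hu => (hderiv u hu).continuousAt.continuousWithinAt)
    (fun u hu => (hderiv u (interior_subset hu)).hasDerivWithinAt) fun u hu => ?_
  have hau := ha_pos u (interior_subset hu)
  exact div_nonpos_of_nonpos_of_nonneg (sub_nonpos.2 (hfa u (interior_subset hu))) (by positivity)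

theorem IsCauchyG.monotoneOn {a g : ℝ → ℝ} (hg : IsCauchyG a g) : MonotoneOn g (Ioi 0) := by
  obtain ⟨-, -, -, -, hg_deriv⟩ := hg
  refine monotoneOn_of_hasDerivWithinAt_nonneg (f' := fun s => 1 / Real.sqrt (a (g s)))
    (convex_Ioi 0)
    (fun s hs => (hg_deriv s hs).continuousAt.continuousWithinAt)
    (fun s hs => (hg_deriv s (interior_subset hs)).hasDerivWithinAt) fun s _ => by positivity

theorem h_nonincreasing_general (a : ℝ → ℝ) (ha_pos : ∀ s > (0 : ℝ), 0 < a s)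
    (ha_reg : ContDiffOn ℝ 1 a (Ioi 0))
    (f : ℝ → ℝ) (hf_reg : ContDiffOn ℝ 1 f (Ioi 0))
    (hfa : ∀ s > (0 : ℝ), 2 * deriv f s * a s ≤ f s * deriv a s)
    (g : ℝ → ℝ) (hg : IsCauchyG a g) :
    AntitoneOn (fun s => f (g s) / Real.sqrt (a (g s))) (Ioi 0) :=
  (antitoneOn_div_sqrt (convex_Ioi 0) isOpen_Ioi ha_pos (hf_reg.differentiableOn one_ne_zero)
    (ha_reg.differentiableOn one_ne_zero) hfa).comp_MonotoneOn hg.monotoneOn hg.2.2.2.1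

/-- If `2f'(s)a(s) ≤ f(s)a'(s)` for every `s > 0`, then `s ↦ f(g(s))/√(a(g(s)))`
is nonincreasing on `(0,∞)`. -/
theorem h_nonincreasing (a : ℝ → ℝ) (ha_pos : ∀ s > (0 : ℝ), 0 < a s)
    (ha_reg : ContDiffOn ℝ 1 a (Ioi 0)) (ha_bdd : ∃ c > (0 : ℝ), ∀ s > (0 : ℝ), c ≤ a s)
    (f : ℝ → ℝ) (hf_pos : ∀ s > (0 : ℝ), 0 < f s) (hf_reg : ContDiffOn ℝ 1 f (Ioi 0))
    (hfa : ∀ s > (0 : ℝ), 2 * deriv f s * a s ≤ f s * deriv a s)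
    (g : ℝ → ℝ) (hg : IsCauchyG a g) :
    AntitoneOn (fun s => f (g s) / Real.sqrt (a (g s))) (Ioi 0) :=
  h_nonincreasing_general a ha_pos ha_reg f hf_reg hfa g hg
end

section
/- Let g be the unique solution of the Cauchy problem g' = 1/√(a∘g), g(0) = 0, g > 0 on (0,∞). Then lim_{s→+∞} g(s)/s^{2/(k+2)} = ((k+2)/(2√(a_∞)))^{2/(k+2)}. -/
/-!
Since `g' = 1/√(a ∘ g) > 0` and `a` is continuous, `g` cannot stay bounded: on a compact
range `[g 1, b] ⊂ (0, ∞)` its derivative would be bounded below by a positive constant.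
Hence `g → ∞`, and for `h = g^((k+2)/2)` the equation gives
`h' = ((k+2)/2) / √(a(g)/g^k) → (k+2)/(2√a_∞)`. A derivative limit at infinity is also the
limit of `h(s)/s`, and raising to the power `2/(k+2)` concludes.
-/

open Set Filter
open scoped Topology

theorem Asymptotics.isLittleO_sub_mul_id_of_hasDerivAt {f f' : ℝ → ℝ} {L : ℝ}
    (hf : ∀ᶠ s in atTop, HasDerivAt f (f' s) s) (hf' : Tendsto f' atTop (𝓝 L)) :
    (fun s => f s - L * s) =o[atTop] id := by
  refine Asymptotics.isLittleO_iff.2 fun c hc => ?_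
  obtain ⟨t₀, ht₀⟩ := eventually_atTop.1
    ((hf.and (Metric.tendsto_nhds.1 hf' (c / 2) (half_pos hc))).and (eventually_ge_atTop 0))
  have hslope : ∀ s ≥ t₀, |f s - L * s - (f t₀ - L * t₀)| ≤ c / 2 * (s - t₀) :=
    fun s hs => norm_image_sub_le_of_norm_deriv_le_segment' (f := fun s => f s - L * s)
      (fun x hx => ((ht₀ x hx.1).1.1.sub ((hasDerivAt_id x).const_mul L)).hasDerivWithinAt)
      (fun x hx => by simpa [Real.dist_eq] using (ht₀ x hx.1).1.2.le) s ⟨hs, le_rfl⟩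
  filter_upwards [eventually_ge_atTop t₀, eventually_ge_atTop (2 * |f t₀ - L * t₀| / c)]
    with s hst₀ hsc
  have ht₀0 : 0 ≤ t₀ := (ht₀ t₀ le_rfl).2
  have hsc' : 2 * |f t₀ - L * t₀| ≤ c * s := by rwa [div_le_iff₀' hc] at hsc
  rw [Real.norm_eq_abs, Real.norm_eq_abs, id, abs_of_nonneg (ht₀0.trans hst₀)]
  nlinarith [hslope s hst₀, abs_sub_abs_le_abs_sub (f s - L * s) (f t₀ - L * t₀)]

theorem tendsto_div_id_of_hasDerivAt {f f' : ℝ → ℝ} {L : ℝ}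
    (hf : ∀ᶠ s in atTop, HasDerivAt f (f' s) s) (hf' : Tendsto f' atTop (𝓝 L)) :
    Tendsto (fun s => f s / s) atTop (𝓝 L) := by
  have h :=
    (Asymptotics.isLittleO_sub_mul_id_of_hasDerivAt hf hf').tendsto_div_nhds_zero.add_const L
  rw [zero_add] at h
  refine h.congr' ?_
  filter_upwards [eventually_ne_atTop 0] with s hs
  simp only [id]
  field_simp
  ring

theorem tendsto_atTop_of_hasDerivAt_comp {F g : ℝ → ℝ} (hF : ContinuousOn F (Ioi 0))
    (hF_pos : ∀ x > 0, 0 < F x) (hg_pos : ∀ s > 0, 0 < g s)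
    (hg : ∀ s > 0, HasDerivAt g (F (g s)) s) : Tendsto g atTop atTop := by
  have hIci : Ici (1 : ℝ) ⊆ Ioi 0 := Ici_subset_Ioi.2 one_pos
  have hmono : MonotoneOn g (Ioi 0) :=
    monotoneOn_of_hasDerivWithinAt_nonneg (convex_Ioi 0)
      (fun s hs => (hg s hs).continuousAt.continuousWithinAt)
      (fun s hs => (hg s (interior_subset hs)).hasDerivWithinAt)
      (fun s hs => (hF_pos _ (hg_pos s (interior_subset hs))).le)
  refine tendsto_atTop_atTop.2 fun b => ?_
  obtain ⟨s, hs1, hbs⟩ : ∃ s ≥ 1, b ≤ g s := by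
    by_contra! hlt
    have hg1 : g 1 ∈ Icc (g 1) b := ⟨le_rfl, (hlt 1 le_rfl).le⟩
    have hIcc : Icc (g 1) b ⊆ Ioi 0 := fun x hx => (hg_pos 1 one_pos).trans_le hx.1
    obtain ⟨x, hx, hmin⟩ := isCompact_Icc.exists_isMinOn ⟨_, hg1⟩ (hF.mono hIcc)
    have hm : 0 < F x := hF_pos x (hIcc hx)
    have hgrowth : ∀ s ≥ 1, F x * (s - 1) ≤ g s - g 1 := fun s hs =>
      (convex_Ici 1).mul_sub_le_image_sub_of_le_deriv
        (fun t ht => (hg t (hIci ht)).continuousAt.continuousWithinAt)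
        (fun t ht => (hg t (hIci (interior_subset ht))).differentiableAt.differentiableWithinAt)
        (fun t ht => by
          have ht1 : 1 ≤ t := interior_subset (s := Ici 1) ht
          rw [(hg t (hIci ht1)).deriv]
          exact hmin ⟨hmono (hIci self_mem_Ici) (hIci ht1) ht1, (hlt t ht1).le⟩)
        1 self_mem_Ici s hs hs
    have hb : 0 ≤ (b - g 1) / F x := div_nonneg (sub_nonneg.2 hg1.2) hm.le
    have := hgrowth (1 + (b - g 1) / F x) (le_add_of_nonneg_right hb)
    rw [add_sub_cancel_left, mul_div_cancel₀ _ hm.ne'] at this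
    linarith [hlt _ (le_add_of_nonneg_right hb)]
  exact ⟨s, fun t ht => hbs.trans (hmono (hIci hs1) (hIci (hs1.trans ht)) ht)⟩

theorem tendsto_div_rpow_inv_of_tendsto_rpow_div_s12 {u : ℝ → ℝ} {q L : ℝ} (hq : 0 < q)
    (hu : ∀ᶠ s in atTop, 0 ≤ u s) (h : Tendsto (fun s => u s ^ q / s) atTop (𝓝 L)) :
    Tendsto (fun s => u s / s ^ q⁻¹) atTop (𝓝 (L ^ q⁻¹)) := by
  refine (h.rpow_const (Or.inr (inv_nonneg.2 hq.le))).congr' ?_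
  filter_upwards [hu, eventually_ge_atTop 0] with s hus hs
  rw [Real.div_rpow (Real.rpow_nonneg hus _) hs, ← Real.rpow_mul hus, mul_inv_cancel₀ hq.ne',
    Real.rpow_one]

theorem HasDerivAt.rpow_of_inv_sqrt {g : ℝ → ℝ} {A k s : ℝ} (hgs : 0 < g s)
    (hg : HasDerivAt g (1 / √A) s) :
    HasDerivAt (fun t => g t ^ ((k + 2) / 2)) ((k + 2) / 2 / √(A / g s ^ k)) s := by
  convert hg.rpow_const (p := (k + 2) / 2) (Or.inl hgs.ne') using 1
  have hsqrt : √(g s ^ k) = g s ^ ((k + 2) / 2 - 1) := by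
    rw [Real.sqrt_eq_rpow, ← Real.rpow_mul hgs.le]
    ring_nf
  rw [Real.sqrt_div' _ (Real.rpow_nonneg hgs.le k), hsqrt]
  field_simp

theorem g_asymptotics_at_infinity_general (a : ℝ → ℝ) (ha_pos : ∀ s > (0 : ℝ), 0 < a s)
    (ha_reg : ContDiffOn ℝ 1 a (Ioi 0))
    (a_inf k : ℝ) (ha_inf : 0 < a_inf) (hk : 0 ≤ k)
    (hlim_a : Tendsto (fun s : ℝ => a s / s ^ k) atTop (𝓝 a_inf))
    (g : ℝ → ℝ) (hg : IsCauchyG a g) :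
    Tendsto (fun s : ℝ => g s / s ^ (2 / (k + 2))) atTop
      (𝓝 (((k + 2) / (2 * Real.sqrt a_inf)) ^ (2 / (k + 2)))) := by
  obtain ⟨-, -, -, hg_pos, hg_deriv⟩ := hg
  have hg_top : Tendsto g atTop atTop :=
    tendsto_atTop_of_hasDerivAt_comp (F := fun x => 1 / √(a x))
      (continuousOn_const.div ha_reg.continuousOn.sqrt
        fun x hx => (Real.sqrt_pos.2 (ha_pos x hx)).ne')
      (fun x hx => one_div_pos.2 (Real.sqrt_pos.2 (ha_pos x hx))) hg_pos hg_deriv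
  have hh : ∀ᶠ s in atTop, HasDerivAt (fun t => g t ^ ((k + 2) / 2))
      ((k + 2) / 2 / √(a (g s) / g s ^ k)) s :=
    (eventually_gt_atTop 0).mono fun s hs => (hg_deriv s hs).rpow_of_inv_sqrt (hg_pos s hs)
  have hh' : Tendsto (fun s => (k + 2) / 2 / √(a (g s) / g s ^ k)) atTop
      (𝓝 ((k + 2) / 2 / √a_inf)) :=
    tendsto_const_nhds.div (hlim_a.comp hg_top).sqrt (Real.sqrt_pos.2 ha_inf).ne'
  have := tendsto_div_rpow_inv_of_tendsto_rpow_div_s12 (by linarith)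
    ((eventually_gt_atTop 0).mono fun s hs => (hg_pos s hs).le)
    (tendsto_div_id_of_hasDerivAt hh hh')
  rwa [inv_div, div_div] at this

/-- Asymptotic behavior of `g` at infinity:
`lim_{s→+∞} g(s)/s^{2/(k+2)} = ((k+2)/(2√a_∞))^{2/(k+2)}`. -/
theorem g_asymptotics_at_infinity (a : ℝ → ℝ) (ha_pos : ∀ s > (0 : ℝ), 0 < a s)
    (ha_reg : ContDiffOn ℝ 1 a (Ioi 0)) (ha_bdd : ∃ c > (0 : ℝ), ∀ s > (0 : ℝ), c ≤ a s)
    (a_inf k : ℝ) (ha_inf : 0 < a_inf) (hk : 0 ≤ k)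
    (hlim_a : Tendsto (fun s : ℝ => a s / s ^ k) atTop (𝓝 a_inf))
    (g : ℝ → ℝ) (hg : IsCauchyG a g) :
    Tendsto (fun s : ℝ => g s / s ^ (2 / (k + 2))) atTop
      (𝓝 (((k + 2) / (2 * Real.sqrt a_inf)) ^ (2 / (k + 2)))) :=
  g_asymptotics_at_infinity_general a ha_pos ha_reg a_inf k ha_inf hk hlim_a g hg
end

section
/- Let g be the unique solution of the Cauchy problem g' = 1/√(a∘g), g(0) = 0, g > 0 on (0,∞). Then ∫₁^{+∞} f(g(s))/√(a(g(s))) ds < +∞, i.e., the function s ↦ f(g(s))/√(a(g(s))) is integrable on (1,+∞). -/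
open Set Filter MeasureTheory
open scoped Topology

theorem Asymptotics.isBigO_rpow_neg_of_tendsto_mul_rpow {f : ℝ → ℝ} {p L : ℝ}
    (hlim : Tendsto (fun x => f x * x ^ p) atTop (𝓝 L)) :
    f =O[atTop] fun x => x ^ (-p) := by
  refine ((hlim.isBigO_one ℝ).mul (Asymptotics.isBigO_refl (fun x => x ^ (-p)) atTop)).congr'
    ?_ (by simp)
  filter_upwards [eventually_gt_atTop 0] with x hx
  rw [mul_assoc, ← Real.rpow_add hx, add_neg_cancel, Real.rpow_zero, mul_one]

theorem integrableOn_Ici_of_tendsto_mul_rpow {f : ℝ → ℝ} {c p L : ℝ}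
    (hf : ContinuousOn f (Ici c)) (hp : 1 < p)
    (hlim : Tendsto (fun x => f x * x ^ p) atTop (𝓝 L)) :
    IntegrableOn f (Ici c) :=
  (hf.locallyIntegrableOn measurableSet_Ici).integrableOn_of_isBigO_atTop
    (Asymptotics.isBigO_rpow_neg_of_tendsto_mul_rpow hlim)
    (integrableAtFilter_rpow_atTop_iff.mpr (by linarith))

theorem IsCauchyG.strictMonoOn_s13 {a g : ℝ → ℝ} (ha_pos : ∀ s > (0 : ℝ), 0 < a s)
    (hg : IsCauchyG a g) : StrictMonoOn g (Ici 0) := by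
  obtain ⟨hg_cont, -, -, hg_pos, hg_deriv⟩ := hg
  refine strictMonoOn_of_deriv_pos (convex_Ici 0) hg_cont fun x hx => ?_
  rw [interior_Ici] at hx
  rw [(hg_deriv x hx).deriv]
  exact one_div_pos.mpr (Real.sqrt_pos.mpr (ha_pos _ (hg_pos x hx)))

theorem h_integrable_at_infinity_general (a : ℝ → ℝ) (ha_pos : ∀ s > (0 : ℝ), 0 < a s)
    (f : ℝ → ℝ) (hf_reg : ContDiffOn ℝ 1 f (Ioi 0))
    (f_inf p : ℝ) (hp : 1 < p)
    (hlim_f : Tendsto (fun s : ℝ => f s * s ^ p) atTop (𝓝 f_inf))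
    (g : ℝ → ℝ) (hg : IsCauchyG a g) :
    IntegrableOn (fun s => f (g s) / Real.sqrt (a (g s))) (Ioi 1) := by
  have hg_mono := hg.strictMonoOn_s13 ha_pos
  obtain ⟨-, -, -, hg_pos, hg_deriv⟩ := hg
  have hf_int : IntegrableOn f (Ici (g 1)) :=
    integrableOn_Ici_of_tendsto_mul_rpow
      (hf_reg.continuousOn.mono fun x hx => (hg_pos 1 one_pos).trans_le hx) hp hlim_f
  have h_Ioi_sub : Ioi (1 : ℝ) ⊆ Ici 0 := Ioi_subset_Ici zero_le_one
  have h_image : g '' Ioi 1 ⊆ Ici (g 1) := by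
    rintro _ ⟨s, hs, rfl⟩
    exact hg_mono.monotoneOn (mem_Ici.mpr zero_le_one) (h_Ioi_sub hs) (le_of_lt hs)
  have h_subst := (integrableOn_image_iff_integrableOn_abs_deriv_smul measurableSet_Ioi
    (fun s hs => (hg_deriv s (one_pos.trans hs)).hasDerivWithinAt)
    (hg_mono.injOn.mono h_Ioi_sub) f).mp (hf_int.mono_set h_image)
  refine h_subst.congr_fun (fun s _ => ?_) measurableSet_Ioi
  simp only [smul_eq_mul, abs_of_nonneg (one_div_nonneg.mpr (Real.sqrt_nonneg _)),
    one_div_mul_eq_div]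

/-- `∫₁^{+∞} f(g(s))/√(a(g(s))) ds < +∞`: the function `s ↦ f(g(s))/√(a(g(s)))` is
integrable on `(1,+∞)`. -/
theorem h_integrable_at_infinity (a : ℝ → ℝ) (ha_pos : ∀ s > (0 : ℝ), 0 < a s)
    (ha_reg : ContDiffOn ℝ 1 a (Ioi 0)) (ha_bdd : ∃ c > (0 : ℝ), ∀ s > (0 : ℝ), c ≤ a s)
    (f : ℝ → ℝ) (hf_pos : ∀ s > (0 : ℝ), 0 < f s) (hf_reg : ContDiffOn ℝ 1 f (Ioi 0))
    (a_inf f_inf k p : ℝ) (ha_inf : 0 < a_inf) (hf_inf : 0 < f_inf) (hk : 0 ≤ k) (hp : 1 < p)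
    (hlim_a : Tendsto (fun s : ℝ => a s / s ^ k) atTop (𝓝 a_inf))
    (hlim_f : Tendsto (fun s : ℝ => f s * s ^ p) atTop (𝓝 f_inf))
    (g : ℝ → ℝ) (hg : IsCauchyG a g) :
    IntegrableOn (fun s => f (g s) / Real.sqrt (a (g s))) (Ioi 1) :=
  h_integrable_at_infinity_general a ha_pos f hf_reg f_inf p hp hlim_f g hg
end

section
/- Let g be the unique solution of the Cauchy problem g' = 1/√(a∘g), g(0) = 0, g > 0 on (0,∞). Then for every ℓ ≥ 0 there exists a unique φ ∈ C([0,∞)) ∩ C²((0,∞)) such that φ'(s) = √(ℓ² + 2∫_{g(φ(s))}^{+∞} f(ξ)dξ) for all s > 0, φ(0) = 0, φ(s) > 0 for all s > 0, lim_{s→+∞} φ'(s) = ℓ, and lim_{s→+∞} φ(s) = +∞. -/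
open Set Filter MeasureTheory
open scoped Topology

/-- `φ` solves the first-order problem `φ'(s) = √(ℓ² + 2∫_{g(φ(s))}^{+∞} f(ξ)dξ)` for
`s > 0`, with `φ(0) = 0`, `φ > 0` on `(0,∞)`, `φ ∈ C([0,∞)) ∩ C²((0,∞))`,
`lim_{s→+∞} φ'(s) = ℓ` and `lim_{s→+∞} φ(s) = +∞`. -/
def IsPhi (a f : ℝ → ℝ) (g : ℝ → ℝ) (ℓ : ℝ) (φ : ℝ → ℝ) : Prop :=
  ContinuousOn φ (Ici 0) ∧ ContDiffOn ℝ 2 φ (Ioi 0) ∧ φ 0 = 0 ∧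
  (∀ s > (0 : ℝ), 0 < φ s) ∧
  (∀ s > (0 : ℝ),
    HasDerivAt φ (Real.sqrt (ℓ ^ 2 + 2 * ∫ ξ in Ioi (g (φ s)), f ξ)) s) ∧
  Tendsto (deriv φ) atTop (𝓝 ℓ) ∧ Tendsto φ atTop atTop

/-!
Separation of variables. With `v t = √(ℓ² + 2 ∫_{g t}^∞ f)` the problem is the autonomous equation
`φ' = v ∘ φ`, `φ 0 = 0`. Since `f > 0` is integrable at `∞` (it decays like `s^(-p)`, `p > 1`) and
`g` increases, `v` is positive and nonincreasing on `(0, ∞)`. Hence `1 / v` is bounded near `0` and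
bounded below near `∞`, so the travel time `T t = ∫₀ᵗ du / v u` maps `[0, ∞)` increasingly onto
itself. The solution is `φ = T⁻¹`; conversely every solution `ψ` satisfies `(T ∘ ψ)' = 1`, so
`T ∘ ψ = id`. Finally `g → ∞` (its speed `1 / √(a ∘ g)` is bounded below while `g` stays bounded),
so `∫_{g (φ s)}^∞ f → 0` and `φ' = v ∘ φ → ℓ`.
-/

theorem contDiffOn_succ_of_hasDerivAt {n : ℕ} {u u' : ℝ → ℝ} {s : Set ℝ} (hs : IsOpen s)
    (hu : ∀ x ∈ s, HasDerivAt u (u' x) x) (hu' : ContDiffOn ℝ n u' s) :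
    ContDiffOn ℝ (n + 1) u s := by
  rw [contDiffOn_succ_iff_deriv_of_isOpen hs]
  exact ⟨fun x hx => (hu x hx).differentiableAt.differentiableWithinAt, by simp,
    hu'.congr fun x hx => (hu x hx).deriv⟩

section TailIntegral

variable {f : ℝ → ℝ}

theorem integrableOn_Ioi_of_tendsto_mul_rpow {p L x : ℝ} (hp : 1 < p)
    (hf : ContinuousOn f (Ici x)) (hlim : Tendsto (fun s => f s * s ^ p) atTop (𝓝 L)) :
    IntegrableOn f (Ioi x) := by
  have hO : f =O[atTop] fun s => s ^ (-p) := by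
    refine ((hlim.isBigO_one ℝ).mul (Asymptotics.isBigO_refl (fun s : ℝ => s ^ (-p)) _)).congr'
      ?_ (by simp)
    filter_upwards [eventually_gt_atTop 0] with s hs
    rw [mul_assoc, ← Real.rpow_add hs, add_neg_cancel, Real.rpow_zero, mul_one]
  refine (LocallyIntegrableOn.integrableOn_of_isBigO_atTop ?_ hO ?_).mono_set Ioi_subset_Ici_self
  · exact hf.locallyIntegrableOn measurableSet_Ici
  · exact integrableAtFilter_rpow_atTop_iff.2 (by linarith)

theorem hasDerivAt_integral_Ioi {a x : ℝ} (hax : a < x) (hint : IntegrableOn f (Ioi a))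
    (hf : ContinuousAt f x) : HasDerivAt (fun y => ∫ ξ in Ioi y, f ξ) (-f x) x := by
  have hprim : HasDerivAt (fun y => ∫ ξ in a..y, f ξ) (f x) x :=
    intervalIntegral.integral_hasDerivAt_right
      ((intervalIntegrable_iff_integrableOn_Ioc_of_le hax.le).2 (hint.mono_set Ioc_subset_Ioi_self))
      (AEStronglyMeasurable.stronglyMeasurableAtFilter_of_mem hint.aestronglyMeasurable
        (Ioi_mem_nhds hax)) hf
  refine (hprim.const_sub (∫ ξ in Ioi a, f ξ)).congr_of_eventuallyEq ?_
  filter_upwards [Ioi_mem_nhds hax] with y hy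
  exact (intervalIntegral.integral_Ioi_sub_Ioi hint (le_of_lt hy)).symm ▸ by ring

theorem integral_Ioi_pos {x : ℝ} (hint : IntegrableOn f (Ioi x)) (hf : ∀ ξ > x, 0 < f ξ) :
    0 < ∫ ξ in Ioi x, f ξ := by
  rw [setIntegral_pos_iff_support_of_nonneg_ae
    ((ae_restrict_iff' measurableSet_Ioi).2 (ae_of_all _ fun ξ hξ => (hf ξ hξ).le)) hint]
  have hsupp : Ioi x ⊆ Function.support f := fun ξ hξ => (hf ξ hξ).ne'
  simp [inter_eq_right.2 hsupp]

theorem integral_Ioi_le_integral_Ioi {x y : ℝ} (hxy : x ≤ y) (hint : IntegrableOn f (Ioi x))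
    (hf : ∀ ξ > x, 0 ≤ f ξ) : ∫ ξ in Ioi y, f ξ ≤ ∫ ξ in Ioi x, f ξ :=
  setIntegral_mono_set hint ((ae_restrict_iff' measurableSet_Ioi).2 (ae_of_all _ hf))
    (Ioi_subset_Ioi hxy).eventuallyLE

theorem contDiffOn_integral_Ioi {c : ℝ} (hf : ContinuousOn f (Ioi c))
    (hint : ∀ x > c, IntegrableOn f (Ioi x)) :
    ContDiffOn ℝ 1 (fun x => ∫ ξ in Ioi x, f ξ) (Ioi c) := by
  have hderiv : ∀ x ∈ Ioi c, HasDerivAt (fun x => ∫ ξ in Ioi x, f ξ) (-f x) x := fun x hx =>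
    hasDerivAt_integral_Ioi (a := (c + x) / 2) (by linarith [mem_Ioi.1 hx])
      (hint _ (by linarith [mem_Ioi.1 hx])) (hf.continuousAt (Ioi_mem_nhds hx))
  simpa using contDiffOn_succ_of_hasDerivAt (n := 0) isOpen_Ioi hderiv
    (contDiffOn_zero.2 hf.neg)

end TailIntegral

section Autonomous

variable {v φ : ℝ → ℝ}

theorem strictMonoOn_of_hasDerivAt_eq_comp (hv_pos : ∀ x > 0, 0 < v x)
    (hφ_pos : ∀ s > 0, 0 < φ s) (hφ : ∀ s > 0, HasDerivAt φ (v (φ s)) s) :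
    StrictMonoOn φ (Ioi 0) :=
  strictMonoOn_of_deriv_pos (convex_Ioi 0)
    (fun s hs => (hφ s hs).continuousAt.continuousWithinAt)
    (fun s hs => by
      rw [interior_Ioi] at hs
      rw [(hφ s hs).deriv]
      exact hv_pos _ (hφ_pos s hs))

theorem tendsto_atTop_of_hasDerivAt_eq_comp (hv_cont : ContinuousOn v (Ioi 0))
    (hv_pos : ∀ x > 0, 0 < v x) (hφ_pos : ∀ s > 0, 0 < φ s)
    (hφ : ∀ s > 0, HasDerivAt φ (v (φ s)) s) : Tendsto φ atTop atTop := by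
  have hmono := (strictMonoOn_of_hasDerivAt_eq_comp hv_pos hφ_pos hφ).monotoneOn
  refine tendsto_atTop_atTop.2 fun M => ?_
  suffices ∃ s ≥ 1, M ≤ φ s by
    obtain ⟨s, hs1, hs⟩ := this
    exact ⟨s, fun t hts =>
      hs.trans (hmono (mem_Ioi.2 (by linarith)) (mem_Ioi.2 (by linarith)) hts)⟩
  by_contra! hbdd
  have hφ1 : 0 < φ 1 := hφ_pos 1 one_pos
  -- if `φ` stayed below `M`, its speed would be bounded below on the compact range `[φ 1, M]`
  obtain ⟨x₀, hx₀, hmin⟩ := (isCompact_Icc (a := φ 1) (b := M)).exists_isMinOn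
    (nonempty_Icc.2 (hbdd 1 le_rfl).le) (hv_cont.mono fun x hx => hφ1.trans_le hx.1)
  set c := v x₀
  have hc : 0 < c := hv_pos x₀ (hφ1.trans_le hx₀.1)
  have hrange : ∀ s ≥ 1, φ s ∈ Icc (φ 1) M := fun s hs =>
    ⟨hmono (mem_Ioi.2 one_pos) (mem_Ioi.2 (by linarith)) hs, (hbdd s hs).le⟩
  set s := 1 + M / c
  have hs : 1 < s := by
    have : 0 < M := hφ1.trans (hbdd 1 le_rfl)
    simp only [s]; linarith [div_pos this hc]
  obtain ⟨ξ, hξ, hslope⟩ := exists_hasDerivAt_eq_slope φ (fun t => v (φ t)) hs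
    (fun t ht => (hφ t (by linarith [ht.1])).continuousAt.continuousWithinAt)
    (fun t ht => hφ t (by linarith [ht.1]))
  have hcξ : c ≤ v (φ ξ) := hmin (hrange ξ hξ.1.le)
  rw [hslope, le_div_iff₀ (by linarith)] at hcξ
  have : c * (s - 1) = M := by simp only [s]; field_simp; ring
  linarith [hbdd s hs.le]

noncomputable def invSpeed (v : ℝ → ℝ) (u : ℝ) : ℝ := if 0 < u then (v u)⁻¹ else 0

/-- Time `∫₀ᵗ du / v u` needed by a solution of `φ' = v ∘ φ` started at `0` to reach `t > 0`;
it is extended by `t` on `(-∞, 0]` so as to be an order isomorphism of `ℝ`. -/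
noncomputable def travelTime (v : ℝ → ℝ) (t : ℝ) : ℝ := (∫ u in (0 : ℝ)..t, invSpeed v u) + min t 0

theorem invSpeed_of_pos {u : ℝ} (hu : 0 < u) : invSpeed v u = (v u)⁻¹ := if_pos hu

theorem invSpeed_of_nonpos {u : ℝ} (hu : u ≤ 0) : invSpeed v u = 0 := if_neg (not_lt.2 hu)

theorem invSpeed_pos (hv_pos : ∀ x > 0, 0 < v x) {u : ℝ} (hu : 0 < u) : 0 < invSpeed v u := by
  rw [invSpeed_of_pos hu]
  exact inv_pos.2 (hv_pos u hu)

theorem invSpeed_nonneg (hv_pos : ∀ x > 0, 0 < v x) (u : ℝ) : 0 ≤ invSpeed v u := by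
  rcases le_or_gt u 0 with hu | hu
  · rw [invSpeed_of_nonpos hu]
  · exact (invSpeed_pos hv_pos hu).le

theorem monotone_invSpeed (hv_pos : ∀ x > 0, 0 < v x) (hv_anti : AntitoneOn v (Ioi 0)) :
    Monotone (invSpeed v) := by
  intro x y hxy
  rcases le_or_gt x 0 with hx | hx
  · rw [invSpeed_of_nonpos hx]
    exact invSpeed_nonneg hv_pos y
  · have hy : 0 < y := hx.trans_le hxy
    rw [invSpeed_of_pos hx, invSpeed_of_pos hy]
    exact inv_anti₀ (hv_pos y hy) (hv_anti hx hy hxy)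

theorem intervalIntegrable_invSpeed (hv_pos : ∀ x > 0, 0 < v x) (hv_anti : AntitoneOn v (Ioi 0))
    (a b : ℝ) : IntervalIntegrable (invSpeed v) volume a b :=
  (monotone_invSpeed hv_pos hv_anti).intervalIntegrable

theorem travelTime_of_nonpos {t : ℝ} (ht : t ≤ 0) : travelTime v t = t := by
  have hzero : EqOn (invSpeed v) 0 (uIcc 0 t) := fun u hu =>
    invSpeed_of_nonpos (uIcc_of_ge ht ▸ hu).2
  rw [travelTime, intervalIntegral.integral_congr hzero, min_eq_left ht]
  simp

theorem travelTime_sub_travelTime (hv_pos : ∀ x > 0, 0 < v x) (hv_anti : AntitoneOn v (Ioi 0))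
    (x y : ℝ) : travelTime v y - travelTime v x =
      (∫ u in x..y, invSpeed v u) + (min y 0 - min x 0) := by
  have hint := intervalIntegrable_invSpeed hv_pos hv_anti
  rw [travelTime, travelTime,
    ← intervalIntegral.integral_add_adjacent_intervals (hint 0 x) (hint x y)]
  ring

theorem strictMono_travelTime (hv_pos : ∀ x > 0, 0 < v x) (hv_anti : AntitoneOn v (Ioi 0)) :
    StrictMono (travelTime v) := by
  intro x y hxy
  rw [← sub_pos, travelTime_sub_travelTime hv_pos hv_anti]
  rcases lt_or_ge x 0 with hx | hx
  · have hint : 0 ≤ ∫ u in x..y, invSpeed v u :=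
      intervalIntegral.integral_nonneg hxy.le fun u _ => invSpeed_nonneg hv_pos u
    have : min x 0 < min y 0 := by
      rw [min_eq_left hx.le]; exact lt_min hxy hx
    linarith
  · have hint : 0 < ∫ u in x..y, invSpeed v u :=
      intervalIntegral.intervalIntegral_pos_of_pos_on
        (intervalIntegrable_invSpeed hv_pos hv_anti x y)
        (fun u hu => invSpeed_pos hv_pos (hx.trans_lt hu.1)) hxy
    rw [min_eq_right hx, min_eq_right (hx.trans hxy.le)]
    linarith

theorem continuous_travelTime (hv_pos : ∀ x > 0, 0 < v x) (hv_anti : AntitoneOn v (Ioi 0)) :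
    Continuous (travelTime v) :=
  (intervalIntegral.continuous_primitive (intervalIntegrable_invSpeed hv_pos hv_anti) 0).add
    (continuous_id.min continuous_const)

theorem tendsto_travelTime_atTop (hv_pos : ∀ x > 0, 0 < v x) (hv_anti : AntitoneOn v (Ioi 0)) :
    Tendsto (travelTime v) atTop atTop := by
  have hw1 : 0 < invSpeed v 1 := invSpeed_pos hv_pos one_pos
  have hlin : Tendsto (fun t => travelTime v 1 + (t - 1) * invSpeed v 1) atTop atTop :=
    tendsto_atTop_add_const_left _ _
      ((tendsto_atTop_add_const_right _ (-1) tendsto_id).atTop_mul_const hw1)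
  refine tendsto_atTop_mono' _ ?_ hlin
  filter_upwards [eventually_ge_atTop 1] with t ht
  have hlow : ∫ u in (1 : ℝ)..t, invSpeed v 1 ≤ ∫ u in (1 : ℝ)..t, invSpeed v u :=
    intervalIntegral.integral_mono_on ht intervalIntegrable_const
      (intervalIntegrable_invSpeed hv_pos hv_anti 1 t)
      fun u hu => monotone_invSpeed hv_pos hv_anti hu.1
  have hdiff := travelTime_sub_travelTime hv_pos hv_anti 1 t
  rw [intervalIntegral.integral_const, smul_eq_mul] at hlow
  rw [min_eq_right (zero_le_one.trans ht), min_eq_right zero_le_one] at hdiff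
  linarith

theorem continuousOn_invSpeed (hv_cont : ContinuousOn v (Ioi 0)) (hv_pos : ∀ x > 0, 0 < v x) :
    ContinuousOn (invSpeed v) (Ioi 0) :=
  (hv_cont.inv₀ fun x hx => (hv_pos x hx).ne').congr fun _ hu => invSpeed_of_pos hu

theorem hasDerivAt_travelTime (hv_cont : ContinuousOn v (Ioi 0)) (hv_pos : ∀ x > 0, 0 < v x)
    (hv_anti : AntitoneOn v (Ioi 0)) {t : ℝ} (ht : 0 < t) :
    HasDerivAt (travelTime v) (v t)⁻¹ t := by
  have hcont := continuousOn_invSpeed hv_cont hv_pos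
  have hprim := intervalIntegral.integral_hasDerivAt_right
    (intervalIntegrable_invSpeed hv_pos hv_anti 0 t)
    (hcont.stronglyMeasurableAtFilter isOpen_Ioi t ht) (hcont.continuousAt (Ioi_mem_nhds ht))
  rw [← invSpeed_of_pos ht]
  refine (hprim.add_const 0).congr_of_eventuallyEq ?_
  filter_upwards [Ioi_mem_nhds ht] with u hu
  rw [travelTime, min_eq_right (le_of_lt hu)]

theorem exists_hasDerivAt_eq_comp (hv_cont : ContinuousOn v (Ioi 0)) (hv_pos : ∀ x > 0, 0 < v x)
    (hv_anti : AntitoneOn v (Ioi 0)) :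
    ∃ φ : ℝ → ℝ, Continuous φ ∧ φ 0 = 0 ∧ (∀ s > 0, 0 < φ s) ∧
      (∀ s > 0, HasDerivAt φ (v (φ s)) s) ∧ Tendsto φ atTop atTop := by
  have hsurj : Function.Surjective (travelTime v) :=
    (continuous_travelTime hv_pos hv_anti).surjective (tendsto_travelTime_atTop hv_pos hv_anti)
      (tendsto_id.congr' ((eventually_le_atBot 0).mono fun _ ht => (travelTime_of_nonpos ht).symm))
  set e := (strictMono_travelTime hv_pos hv_anti).orderIsoOfSurjective _ hsurj
  have he : ∀ t, e t = travelTime v t := fun _ => rfl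
  have he0 : e 0 = 0 := travelTime_of_nonpos le_rfl
  have hpos : ∀ s > 0, 0 < e.symm s := fun s hs => e.lt_symm_apply.2 (by rwa [he0])
  refine ⟨e.symm, e.symm.continuous, e.symm_apply_eq.2 he0.symm, hpos, fun s hs => ?_,
    e.symm.tendsto_atTop⟩
  have hderiv := HasDerivAt.of_local_left_inverse e.symm.continuous.continuousAt
    (hasDerivAt_travelTime hv_cont hv_pos hv_anti (hpos s hs))
    (inv_ne_zero (hv_pos _ (hpos s hs)).ne') (Eventually.of_forall fun t => ?_)
  · rwa [inv_inv] at hderiv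
  · rw [← he]; exact e.apply_symm_apply t

theorem travelTime_comp_of_hasDerivAt_eq_comp (hv_cont : ContinuousOn v (Ioi 0))
    (hv_pos : ∀ x > 0, 0 < v x) (hv_anti : AntitoneOn v (Ioi 0)) (hφ_cont : ContinuousOn φ (Ici 0))
    (hφ0 : φ 0 = 0) (hφ_pos : ∀ s > 0, 0 < φ s) (hφ : ∀ s > 0, HasDerivAt φ (v (φ s)) s)
    {s : ℝ} (hs : 0 ≤ s) : travelTime v (φ s) = s := by
  rcases hs.eq_or_lt with rfl | hs
  · rw [hφ0, travelTime_of_nonpos le_rfl]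
  have hderiv : ∀ x ∈ Ioo 0 s, HasDerivAt (fun x => travelTime v (φ x) - x) 0 x := by
    intro x hx
    have h := ((hasDerivAt_travelTime hv_cont hv_pos hv_anti (hφ_pos x hx.1)).comp x
      (hφ x hx.1)).sub (hasDerivAt_id x)
    rwa [inv_mul_cancel₀ (hv_pos _ (hφ_pos x hx.1)).ne', sub_self] at h
  obtain ⟨c, -, hc⟩ := exists_hasDerivAt_eq_slope (fun x => travelTime v (φ x) - x) (fun _ => 0)
    hs ((continuous_travelTime hv_pos hv_anti).comp_continuousOn
      (hφ_cont.mono Icc_subset_Ici_self) |>.sub continuousOn_id) hderiv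
  rw [eq_comm, div_eq_zero_iff, hφ0, travelTime_of_nonpos le_rfl] at hc
  linarith [hc.resolve_right (sub_ne_zero.2 hs.ne')]

theorem eqOn_Ici_of_hasDerivAt_eq_comp {ψ : ℝ → ℝ} (hv_cont : ContinuousOn v (Ioi 0))
    (hv_pos : ∀ x > 0, 0 < v x) (hv_anti : AntitoneOn v (Ioi 0))
    (hφ_cont : ContinuousOn φ (Ici 0)) (hφ0 : φ 0 = 0) (hφ_pos : ∀ s > 0, 0 < φ s)
    (hφ : ∀ s > 0, HasDerivAt φ (v (φ s)) s)
    (hψ_cont : ContinuousOn ψ (Ici 0)) (hψ0 : ψ 0 = 0) (hψ_pos : ∀ s > 0, 0 < ψ s)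
    (hψ : ∀ s > 0, HasDerivAt ψ (v (ψ s)) s) : EqOn φ ψ (Ici 0) := fun _ hs =>
  (strictMono_travelTime hv_pos hv_anti).injective <|
    (travelTime_comp_of_hasDerivAt_eq_comp hv_cont hv_pos hv_anti hφ_cont hφ0 hφ_pos hφ hs).trans
      (travelTime_comp_of_hasDerivAt_eq_comp hv_cont hv_pos hv_anti hψ_cont hψ0 hψ_pos hψ hs).symm

theorem contDiffOn_of_hasDerivAt_eq_comp {n : ℕ} (hv : ContDiffOn ℝ n v (Ioi 0))
    (hφ_pos : ∀ s > 0, 0 < φ s) (hφ : ∀ s > 0, HasDerivAt φ (v (φ s)) s) :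
    ContDiffOn ℝ (n + 1) φ (Ioi 0) := by
  induction n with
  | zero =>
    refine contDiffOn_succ_of_hasDerivAt isOpen_Ioi hφ (hv.comp ?_ hφ_pos)
    exact contDiffOn_zero.2 fun s hs => (hφ s hs).continuousAt.continuousWithinAt
  | succ n ih =>
    refine contDiffOn_succ_of_hasDerivAt isOpen_Ioi hφ (hv.comp ?_ hφ_pos)
    exact_mod_cast ih (hv.of_le (by norm_cast; omega))

theorem tendsto_deriv_of_hasDerivAt_eq_comp {L : ℝ} (hv : Tendsto v atTop (𝓝 L))
    (hφ : ∀ s > 0, HasDerivAt φ (v (φ s)) s) (hφ_top : Tendsto φ atTop atTop) :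
    Tendsto (deriv φ) atTop (𝓝 L) :=
  (hv.comp hφ_top).congr' <| (eventually_gt_atTop 0).mono fun s hs => (hφ s hs).deriv.symm

end Autonomous

section Speed

variable {f g : ℝ → ℝ} {ℓ : ℝ}

noncomputable def speed (f g : ℝ → ℝ) (ℓ t : ℝ) : ℝ := √(ℓ ^ 2 + 2 * ∫ ξ in Ioi (g t), f ξ)

theorem speed_pos (hf_pos : ∀ s > 0, 0 < f s) (hf_int : ∀ x > 0, IntegrableOn f (Ioi x))
    (hg_pos : ∀ t > 0, 0 < g t) {t : ℝ} (ht : 0 < t) : 0 < speed f g ℓ t := by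
  have hF := integral_Ioi_pos (hf_int _ (hg_pos t ht))
    fun ξ hξ => hf_pos ξ ((hg_pos t ht).trans hξ)
  exact Real.sqrt_pos.2 (by positivity)

theorem antitoneOn_speed (hf_pos : ∀ s > 0, 0 < f s) (hf_int : ∀ x > 0, IntegrableOn f (Ioi x))
    (hg_pos : ∀ t > 0, 0 < g t) (hg_mono : MonotoneOn g (Ioi 0)) :
    AntitoneOn (speed f g ℓ) (Ioi 0) := by
  intro x hx y hy hxy
  have hF := integral_Ioi_le_integral_Ioi (hg_mono hx hy hxy) (hf_int _ (hg_pos x hx))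
    fun ξ hξ => (hf_pos ξ ((hg_pos x hx).trans hξ)).le
  exact Real.sqrt_le_sqrt (by linarith)

theorem contDiffOn_speed (hf_pos : ∀ s > 0, 0 < f s) (hf_cont : ContinuousOn f (Ioi 0))
    (hf_int : ∀ x > 0, IntegrableOn f (Ioi x)) (hg_pos : ∀ t > 0, 0 < g t)
    (hg : ContDiffOn ℝ 1 g (Ioi 0)) : ContDiffOn ℝ 1 (speed f g ℓ) (Ioi 0) := by
  refine ContDiffOn.sqrt ?_ fun t ht => (Real.sqrt_pos.1 (speed_pos hf_pos hf_int hg_pos ht)).ne'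
  exact contDiffOn_const.add
    (contDiffOn_const.mul ((contDiffOn_integral_Ioi hf_cont hf_int).comp hg hg_pos))

theorem tendsto_speed_atTop (hℓ : 0 ≤ ℓ) (hg_top : Tendsto g atTop atTop) :
    Tendsto (speed f g ℓ) atTop (𝓝 ℓ) := by
  have h := ((tendsto_integral_Ioi_zero (f := f) (μ := volume) hg_top).const_mul 2).const_add
    (ℓ ^ 2) |>.sqrt
  rwa [mul_zero, add_zero, Real.sqrt_sq hℓ] at h

end Speed

theorem phi_existence_uniqueness_general (a : ℝ → ℝ) (ha_pos : ∀ s > (0 : ℝ), 0 < a s)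
    (ha_reg : ContDiffOn ℝ 1 a (Ioi 0))
    (f : ℝ → ℝ) (hf_pos : ∀ s > (0 : ℝ), 0 < f s) (hf_reg : ContDiffOn ℝ 1 f (Ioi 0))
    (f_inf p : ℝ) (hp : 1 < p)
    (hlim_f' : Tendsto (fun s : ℝ => f s * s ^ p) atTop (𝓝 f_inf))
    (g : ℝ → ℝ) (hg : IsCauchyG a g) :
    ∀ ℓ ≥ (0 : ℝ), ∃ φ : ℝ → ℝ, IsPhi a f g ℓ φ ∧
      ∀ φ' : ℝ → ℝ, IsPhi a f g ℓ φ' → EqOn φ φ' (Ici 0) := by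
  intro ℓ hℓ
  obtain ⟨-, hg_C2, -, hg_pos, hg⟩ := hg
  have hf_int : ∀ x > 0, IntegrableOn f (Ioi x) := fun x hx =>
    integrableOn_Ioi_of_tendsto_mul_rpow hp (hf_reg.continuousOn.mono fun _ hξ => hx.trans_le hξ)
      hlim_f'
  have hg'_pos : ∀ x > 0, 0 < 1 / √(a x) := fun x hx =>
    one_div_pos.2 (Real.sqrt_pos.2 (ha_pos x hx))
  have hg'_cont : ContinuousOn (fun x => 1 / √(a x)) (Ioi 0) :=
    continuousOn_const.div (Real.continuous_sqrt.comp_continuousOn ha_reg.continuousOn)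
      fun x hx => (Real.sqrt_pos.2 (ha_pos x hx)).ne'
  have hv_C1 : ContDiffOn ℝ 1 (speed f g ℓ) (Ioi 0) :=
    contDiffOn_speed hf_pos hf_reg.continuousOn hf_int hg_pos (hg_C2.of_le (by norm_num))
  have hv_pos : ∀ t > 0, 0 < speed f g ℓ t := fun t => speed_pos hf_pos hf_int hg_pos
  have hv_anti : AntitoneOn (speed f g ℓ) (Ioi 0) := antitoneOn_speed hf_pos hf_int hg_pos
    (strictMonoOn_of_hasDerivAt_eq_comp hg'_pos hg_pos hg).monotoneOn
  have hv_lim : Tendsto (speed f g ℓ) atTop (𝓝 ℓ) :=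
    tendsto_speed_atTop hℓ (tendsto_atTop_of_hasDerivAt_eq_comp hg'_cont hg'_pos hg_pos hg)
  obtain ⟨φ, hφ_cont, hφ0, hφ_pos, hφ, hφ_top⟩ :=
    exists_hasDerivAt_eq_comp hv_C1.continuousOn hv_pos hv_anti
  refine ⟨φ, ⟨hφ_cont.continuousOn, contDiffOn_of_hasDerivAt_eq_comp (n := 1) hv_C1 hφ_pos hφ,
    hφ0, hφ_pos, hφ, tendsto_deriv_of_hasDerivAt_eq_comp hv_lim hφ hφ_top, hφ_top⟩, ?_⟩
  rintro ψ ⟨hψ_cont, -, hψ0, hψ_pos, hψ, -, -⟩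
  exact eqOn_Ici_of_hasDerivAt_eq_comp hv_C1.continuousOn hv_pos hv_anti hφ_cont.continuousOn
    hφ0 hφ_pos hφ hψ_cont hψ0 hψ_pos hψ

/-- For every `ℓ ≥ 0` there exists a unique solution `φ` of the first-order
problem (unique as a function on `[0,∞)`). -/
theorem phi_existence_uniqueness (a : ℝ → ℝ) (ha_pos : ∀ s > (0 : ℝ), 0 < a s)
    (ha_reg : ContDiffOn ℝ 1 a (Ioi 0)) (ha_bdd : ∃ c > (0 : ℝ), ∀ s > (0 : ℝ), c ≤ a s)
    (f : ℝ → ℝ) (hf_pos : ∀ s > (0 : ℝ), 0 < f s) (hf_reg : ContDiffOn ℝ 1 f (Ioi 0))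
    (a₀ f₀ μ γ a_inf f_inf k p : ℝ)
    (ha₀ : 0 < a₀) (hf₀ : 0 < f₀) (hμ₀ : 0 ≤ μ) (hμ₁ : μ < 1) (hγ : 1 < γ)
    (ha_inf : 0 < a_inf) (hf_inf : 0 < f_inf) (hk : 0 ≤ k) (hp : 1 < p)
    (hlim_a : Tendsto (fun s : ℝ => a s * s ^ (2 * μ)) (𝓝[>] 0) (𝓝 a₀))
    (hlim_f : Tendsto (fun s : ℝ => f s * s ^ γ) (𝓝[>] 0) (𝓝 f₀))
    (hfa : ∀ s > (0 : ℝ), 2 * deriv f s * a s ≤ f s * deriv a s)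
    (hlim_a' : Tendsto (fun s : ℝ => a s / s ^ k) atTop (𝓝 a_inf))
    (hlim_f' : Tendsto (fun s : ℝ => f s * s ^ p) atTop (𝓝 f_inf))
    (g : ℝ → ℝ) (hg : IsCauchyG a g) :
    ∀ ℓ ≥ (0 : ℝ), ∃ φ : ℝ → ℝ, IsPhi a f g ℓ φ ∧
      ∀ φ' : ℝ → ℝ, IsPhi a f g ℓ φ' → EqOn φ φ' (Ici 0) :=
  phi_existence_uniqueness_general a ha_pos ha_reg f hf_pos hf_reg f_inf p hp hlim_f' g hg
end
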